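/- (BCD descent property.) Assume the BCD setting of the nl_context, with parameters τ, π, γ, λ, β > 0. Suppose the sequences {W_i^k}_{i∈[h]}, {U_i^k}_{i∈[h]}, {V_i^k}_{i∈[h−1]} satisfy, for every k ≥ 0: (1) U_h^{k+1} is a global minimizer of U ↦ (τ/2)‖U − W_h^k V_{h−1}^k‖² + (1/(2N))‖Y − (U)_hdmx‖²; (2) for each i ∈ [h], W_i^{k+1} ∈ Prox_{βλ‖·‖_{2,0}}(W_i^{k+1} − β∇_W Φ(W_i^{k+1}; U_i^{k+1}, V_{i−1}^k)), where Φ(W; U, V) := (τ/2)‖U − WV‖² + (γ/2)‖W‖²; (3) for each i ∈ [h−1], V_i^{k+1} is the global minimizer of V ↦ (τ/2)‖U_{i+1}^{k+1} − W_{i+1}^{k+1}V‖² + (π/2)‖V − (U_i^k)_{0/1}‖²; (4) for each i ∈ [h−1], U_i^{k+1} is a global minimizer of U ↦ (τ/2)‖U − W_i^k V_{i−1}^k‖² + (π/2)‖V_i^{k+1} − (U)_{0/1}‖² (here V_0^k := V_0 for all k). Then for every k ≥ 0: F(𝒲^{k+1}, 𝒰^{k+1}, 𝒱^{k+1}) −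 F(𝒲^k, 𝒰^k, 𝒱^k) ≤ −((γ − 1/β)/2) Σ_{i=1}^{h} ‖W_i^{k+1} − W_i^k‖² − (π/2) Σ_{i=1}^{h−1} ‖V_i^{k+1} − V_i^k‖². -/

import Mathlib

/-!
The updates form one backward Gauss–Seidel sweep `U_h, W_h, V_{h-1}, U_{h-1}, W_{h-1}, …, U_1, W_1`
over the blocks of `F`, each block being updated with the others at their current values.
Exact minimisation in a `U`-block does not increase `F`. A `V`-block problem is a quadratic whose
Hessian dominates `π`, so its minimiser beats the old iterate by `(π/2)‖ΔV‖²`. For a `W`-block, the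
prox inclusion tested at the old iterate costs at most `(1/(2β))‖ΔW‖²` plus the linear term
`⟨∇Φ, ΔW⟩`, while the exact Taylor expansion of the quadratic `Φ` gains that linear term plus
`(γ/2)‖ΔW‖²`. Summing the block inequalities, all intermediate values telescope.
-/

set_option autoImplicit false

open Matrix

/-- Squared Frobenius norm of a matrix. -/
noncomputable def frobSq {m n : ℕ} (W : Matrix (Fin m) (Fin n) ℝ) : ℝ :=
  ∑ i, ∑ j, (W i j) ^ 2

open Classical in
/-- `‖W‖_{2,0}`: the number of nonzero columns of `W`, as a real number. -/
noncomputable def norm20 {m n : ℕ} (W : Matrix (Fin m) (Fin n) ℝ) : ℝ :=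
  ((Finset.univ.filter fun j : Fin n => Wᵀ j ≠ 0).card : ℝ)

/-- The proximal operator (as a set of global minimizers):
`Prox_β G (H) = argmin_W { G(W) + (1/(2β))‖W − H‖² }`. -/
def ProxSet {m n : ℕ} (β : ℝ) (G : Matrix (Fin m) (Fin n) ℝ → ℝ)
    (H : Matrix (Fin m) (Fin n) ℝ) : Set (Matrix (Fin m) (Fin n) ℝ) :=
  {W | ∀ Z : Matrix (Fin m) (Fin n) ℝ,
    G W + (1 / (2 * β)) * frobSq (W - H) ≤ G Z + (1 / (2 * β)) * frobSq (Z - H)}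

/-- The step (0/1) function applied entrywise to a matrix. -/
noncomputable def stepM {a b : ℕ} (A : Matrix (Fin a) (Fin b) ℝ) :
    Matrix (Fin a) (Fin b) ℝ :=
  Matrix.of fun i j => if 0 < A i j then (1 : ℝ) else 0

/-- The hardmax of a matrix, applied columnwise: entry `(i,j)` is `1` if `A i j` is
the maximum of column `j`, and `0` otherwise. -/
noncomputable def hdmxM {a b : ℕ} (A : Matrix (Fin a) (Fin b) ℝ) :
    Matrix (Fin a) (Fin b) ℝ :=
  Matrix.of fun i j => if ∀ r, A r j ≤ A i j then (1 : ℝ) else 0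

noncomputable def frobInner {m n : ℕ} (A B : Matrix (Fin m) (Fin n) ℝ) : ℝ :=
  ∑ i, ∑ j, A i j * B i j

section Frobenius

variable {m n p : ℕ}

lemma frobSq_nonneg (A : Matrix (Fin m) (Fin n) ℝ) : 0 ≤ frobSq A :=
  Finset.sum_nonneg fun _ _ => Finset.sum_nonneg fun _ _ => sq_nonneg _

lemma frobSq_add_smul (A B : Matrix (Fin m) (Fin n) ℝ) (t : ℝ) :
    frobSq (A + t • B) = frobSq A + 2 * t * frobInner A B + t ^ 2 * frobSq B := by
  simp only [frobSq, frobInner, Finset.mul_sum, ← Finset.sum_add_distrib]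
  refine Finset.sum_congr rfl fun i _ => Finset.sum_congr rfl fun j _ => ?_
  simp only [Matrix.add_apply, Matrix.smul_apply, smul_eq_mul]
  ring

lemma frobSq_add (A B : Matrix (Fin m) (Fin n) ℝ) :
    frobSq (A + B) = frobSq A + 2 * frobInner A B + frobSq B := by
  simpa using frobSq_add_smul A B 1

lemma frobSq_smul (t : ℝ) (A : Matrix (Fin m) (Fin n) ℝ) :
    frobSq (t • A) = t ^ 2 * frobSq A := by
  simpa [frobSq, frobInner] using frobSq_add_smul 0 A t

lemma frobSq_neg (A : Matrix (Fin m) (Fin n) ℝ) : frobSq (-A) = frobSq A := by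
  rw [← neg_one_smul ℝ, frobSq_smul]
  ring

lemma frobInner_comm (A B : Matrix (Fin m) (Fin n) ℝ) : frobInner A B = frobInner B A := by
  simp only [frobInner, mul_comm]

lemma frobInner_add_smul_right (A B C : Matrix (Fin m) (Fin n) ℝ) (s t : ℝ) :
    frobInner A (s • B + t • C) = s * frobInner A B + t * frobInner A C := by
  simp only [frobInner, Finset.mul_sum, ← Finset.sum_add_distrib]
  refine Finset.sum_congr rfl fun i _ => Finset.sum_congr rfl fun j _ => ?_
  simp only [Matrix.add_apply, Matrix.smul_apply, smul_eq_mul]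
  ring

lemma frobInner_mul_transpose (D : Matrix (Fin m) (Fin n) ℝ) (A : Matrix (Fin m) (Fin p) ℝ)
    (V : Matrix (Fin n) (Fin p) ℝ) :
    frobInner D (A * Vᵀ) = frobInner A (D * V) := by
  simp only [frobInner, mul_apply, transpose_apply, Finset.mul_sum]
  refine Finset.sum_congr rfl fun i _ => ?_
  rw [Finset.sum_comm]
  exact Finset.sum_congr rfl fun l _ => Finset.sum_congr rfl fun j _ => by ring

end Frobenius

lemma eq_zero_of_forall_mul_add_sq_mul_nonneg {a b : ℝ} (h : ∀ t : ℝ, 0 ≤ t * a + t ^ 2 * b) :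
    a = 0 := by
  have hmin : IsLocalMin (fun t : ℝ => t * a + t ^ 2 * b) 0 :=
    Filter.Eventually.of_forall fun t => by simpa using h t
  have hderiv : HasDerivAt (fun t : ℝ => t * a + t ^ 2 * b) a 0 :=
    (((hasDerivAt_id' 0).mul_const a).add ((hasDerivAt_pow 2 0).mul_const b)).congr_deriv
      (by norm_num)
  exact hmin.hasDerivAt_eq_zero hderiv

section BlockDescent

variable {m n p : ℕ}

lemma sufficient_decrease_of_isMin_lsq {τ π : ℝ} (hτ : 0 ≤ τ) {W : Matrix (Fin m) (Fin n) ℝ}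
    {U : Matrix (Fin m) (Fin p) ℝ} {S V' V : Matrix (Fin n) (Fin p) ℝ}
    (hmin : ∀ Z, τ / 2 * frobSq (U - W * V') + π / 2 * frobSq (V' - S) ≤
      τ / 2 * frobSq (U - W * Z) + π / 2 * frobSq (Z - S)) :
    τ / 2 * frobSq (U - W * V') + π / 2 * frobSq (V' - S) + π / 2 * frobSq (V' - V) ≤
      τ / 2 * frobSq (U - W * V) + π / 2 * frobSq (V - S) := by
  obtain ⟨D, rfl⟩ : ∃ D, V = V' + D := ⟨V - V', by abel⟩
  have expand : ∀ t : ℝ,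
      τ / 2 * frobSq (U - W * (V' + t • D)) + π / 2 * frobSq (V' + t • D - S) =
        τ / 2 * frobSq (U - W * V') + π / 2 * frobSq (V' - S) +
          (t * (π * frobInner (V' - S) D - τ * frobInner (U - W * V') (W * D)) +
            t ^ 2 * (τ / 2 * frobSq (W * D) + π / 2 * frobSq D)) := by
    intro t
    rw [show U - W * (V' + t • D) = (U - W * V') + (-t) • (W * D) by
        rw [Matrix.mul_add, Matrix.mul_smul]; module,
      show V' + t • D - S = (V' - S) + t • D by abel, frobSq_add_smul, frobSq_add_smul]
    ring
  have hlin : π * frobInner (V' - S) D - τ * frobInner (U - W * V') (W * D) = 0 :=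
    eq_zero_of_forall_mul_add_sq_mul_nonneg (b := τ / 2 * frobSq (W * D) + π / 2 * frobSq D)
      fun t => by linarith [hmin (V' + t • D), expand t]
  have h1 := expand 1
  rw [one_smul, hlin] at h1
  rw [sub_add_cancel_left, frobSq_neg]
  nlinarith [mul_nonneg hτ (frobSq_nonneg (W * D))]

lemma sufficient_decrease_of_mem_proxSet {τ γ β : ℝ} (hτ : 0 ≤ τ) (hβ : β ≠ 0)
    {g : Matrix (Fin m) (Fin n) ℝ → ℝ} {W' W : Matrix (Fin m) (Fin n) ℝ}
    {V : Matrix (Fin n) (Fin p) ℝ} {U : Matrix (Fin m) (Fin p) ℝ}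
    (hprox : W' ∈ ProxSet β g (W' - β • (τ • ((W' * V - U) * Vᵀ) + γ • W'))) :
    g W' + γ / 2 * frobSq W' + τ / 2 * frobSq (U - W' * V) +
        (γ - 1 / β) / 2 * frobSq (W' - W) ≤
      g W + γ / 2 * frobSq W + τ / 2 * frobSq (U - W * V) := by
  obtain ⟨D, rfl⟩ : ∃ D, W = W' + D := ⟨W - W', by abel⟩
  generalize hG : τ • ((W' * V - U) * Vᵀ) + γ • W' = G at hprox
  have hprox_at_W : g W' ≤ g (W' + D) + (1 / β) / 2 * frobSq D + frobInner D G := by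
    have h := hprox (W' + D)
    rw [sub_sub_cancel, show W' + D - (W' - β • G) = D + β • G by abel, frobSq_smul,
      frobSq_add_smul] at h
    have hscale : 1 / (2 * β) * (frobSq D + 2 * β * frobInner D G + β ^ 2 * frobSq G) -
        1 / (2 * β) * (β ^ 2 * frobSq G) = (1 / β) / 2 * frobSq D + frobInner D G := by
      field_simp
      ring
    linarith
  have htaylor : γ / 2 * frobSq (W' + D) + τ / 2 * frobSq (U - (W' + D) * V) =
      γ / 2 * frobSq W' + τ / 2 * frobSq (U - W' * V) + frobInner D G +
        τ / 2 * frobSq (D * V) + γ / 2 * frobSq D := by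
    rw [show U - (W' + D) * V = -((W' * V - U) + D * V) by rw [Matrix.add_mul]; abel,
      show U - W' * V = -(W' * V - U) by abel, frobSq_neg, frobSq_neg, frobSq_add, frobSq_add,
      ← hG, frobInner_add_smul_right, frobInner_mul_transpose, frobInner_comm W']
    ring
  rw [sub_add_cancel_left, frobSq_neg]
  nlinarith [mul_nonneg hτ (frobSq_nonneg (D * V))]

end BlockDescent

lemma sum_Icc_one_succ_eq_add_sum_shift (n : ℕ) (g : ℕ → ℝ) :
    ∑ i ∈ Finset.Icc 1 (n + 1), g i = g 1 + ∑ i ∈ Finset.Icc 1 n, g (i + 1) := by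
  rw [← Finset.add_sum_Ioc_eq_sum_Icc (by omega), ← Finset.Icc_add_one_left_eq_Ioc,
    ← Finset.map_add_right_Icc 1 n 1, Finset.sum_map]
  rfl

open Finset in
/-- `c₀, c₁, c₂, c₃` are `‖U_i − W_i V_{i−1}‖²` at the successive states `(U, W, V)`,
`(U⁺, W, V)`, `(U⁺, W⁺, V)`, `(U⁺, W⁺, V⁺)` of the sweep, and `e₀, e₁, e₂` are
`‖V_i − (U_i)_{0/1}‖²` at `(V, U)`, `(V⁺, U)`, `(V⁺, U⁺)`. -/
lemma backward_sweep_descent {h : ℕ} (hh : 1 ≤ h) {τ π c a a' : ℝ}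
    {r r' c₀ c₁ c₂ c₃ e₀ e₁ e₂ δW δV : ℕ → ℝ}
    (hUh : τ / 2 * c₁ h + a' ≤ τ / 2 * c₀ h + a)
    (hW : ∀ i ∈ Icc 1 h, r' i + τ / 2 * c₂ i + c * δW i ≤ r i + τ / 2 * c₁ i)
    (hV : ∀ i ∈ Icc 2 h, τ / 2 * c₃ i + π / 2 * e₁ (i - 1) + π / 2 * δV (i - 1) ≤
      τ / 2 * c₂ i + π / 2 * e₀ (i - 1))
    (hU : ∀ i ∈ Icc 1 (h - 1), τ / 2 * c₁ i + π / 2 * e₂ i ≤ τ / 2 * c₀ i + π / 2 * e₁ i)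
    (hc₃ : c₃ 1 = c₂ 1) :
    a' + ∑ i ∈ Icc 1 h, r' i + τ / 2 * ∑ i ∈ Icc 1 h, c₃ i +
          π / 2 * ∑ i ∈ Icc 1 (h - 1), e₂ i -
        (a + ∑ i ∈ Icc 1 h, r i + τ / 2 * ∑ i ∈ Icc 1 h, c₀ i +
          π / 2 * ∑ i ∈ Icc 1 (h - 1), e₀ i) ≤
      -c * ∑ i ∈ Icc 1 h, δW i - π / 2 * ∑ i ∈ Icc 1 (h - 1), δV i := by
  obtain ⟨n, rfl⟩ : ∃ n, h = n + 1 := ⟨h - 1, by omega⟩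
  rw [Nat.add_sub_cancel] at hU ⊢
  have sW := sum_le_sum hW
  have sV : ∑ i ∈ Icc 1 n, (τ / 2 * c₃ (i + 1) + π / 2 * e₁ i + π / 2 * δV i) ≤
      ∑ i ∈ Icc 1 n, (τ / 2 * c₂ (i + 1) + π / 2 * e₀ i) :=
    sum_le_sum fun i hi => by
      simpa using hV (i + 1) (by simp only [mem_Icc] at hi ⊢; omega)
  have sU := sum_le_sum hU
  simp only [sum_add_distrib, ← mul_sum] at sW sV sU
  rw [sum_Icc_succ_top (by omega : 1 ≤ n + 1) c₁, sum_Icc_one_succ_eq_add_sum_shift n c₂] at sW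
  rw [sum_Icc_succ_top (by omega : 1 ≤ n + 1) c₀, sum_Icc_one_succ_eq_add_sum_shift n c₃, hc₃]
  linarith

theorem BCD_descent_property_general
    (h N : ℕ) (hh : 1 ≤ h)
    (d : ℕ → ℕ)
    (Y : Matrix (Fin (d h)) (Fin N) ℝ) (V0 : Matrix (Fin (d 0)) (Fin N) ℝ)
    (τ π γ lam β : ℝ)
    (hτ : 0 < τ) (hβ : 0 < β)
    (W : ℕ → (i : ℕ) → Matrix (Fin (d i)) (Fin (d (i - 1))) ℝ)
    (U : ℕ → (i : ℕ) → Matrix (Fin (d i)) (Fin N) ℝ)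
    (V : ℕ → (i : ℕ) → Matrix (Fin (d i)) (Fin N) ℝ)
    (hV0 : ∀ k, V k 0 = V0)
    (F : ((i : ℕ) → Matrix (Fin (d i)) (Fin (d (i - 1))) ℝ) →
      ((i : ℕ) → Matrix (Fin (d i)) (Fin N) ℝ) →
      ((i : ℕ) → Matrix (Fin (d i)) (Fin N) ℝ) → ℝ)
    (hF : F = fun Wf Uf Vf =>
      (1 / (2 * (N : ℝ))) * frobSq (Y - hdmxM (Uf h)) +
      (∑ i ∈ Finset.Icc 1 h, (lam * norm20 (Wf i) + (γ / 2) * frobSq (Wf i))) +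
      (τ / 2) * (∑ i ∈ Finset.Icc 1 h, frobSq (Uf i - Wf i * Vf (i - 1))) +
      (π / 2) * (∑ i ∈ Finset.Icc 1 (h - 1), frobSq (Vf i - stepM (Uf i))))
    -- (1): `U_h^{k+1}` globally minimizes its subproblem
    (hUh : ∀ k, ∀ Z : Matrix (Fin (d h)) (Fin N) ℝ,
      (τ / 2) * frobSq (U (k + 1) h - W k h * V k (h - 1)) +
          (1 / (2 * (N : ℝ))) * frobSq (Y - hdmxM (U (k + 1) h)) ≤
        (τ / 2) * frobSq (Z - W k h * V k (h - 1)) +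
          (1 / (2 * (N : ℝ))) * frobSq (Y - hdmxM Z))
    -- (2): `W_i^{k+1}` satisfies the proximal fixed-point inclusion, with
    -- `∇_W Φ(W; U, V) = τ(WV − U)Vᵀ + γW` for `Φ(W;U,V) = (τ/2)‖U−WV‖² + (γ/2)‖W‖²`
    (hWup : ∀ k, ∀ i ∈ Finset.Icc 1 h,
      W (k + 1) i ∈ ProxSet β (fun Z => lam * norm20 Z)
        (W (k + 1) i - β •
          (τ • ((W (k + 1) i * V k (i - 1) - U (k + 1) i) * (V k (i - 1))ᵀ) +
            γ • W (k + 1) i)))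
    -- (3): `V_i^{k+1}` globally minimizes its subproblem (indexed here by
    -- `i ∈ {2, …, h}`, i.e. the subproblem of `V_{i−1}^{k+1}` for `i−1 ∈ [h−1]`)
    (hVup : ∀ k, ∀ i ∈ Finset.Icc 2 h, ∀ Z : Matrix (Fin (d (i - 1))) (Fin N) ℝ,
      (τ / 2) * frobSq (U (k + 1) i - W (k + 1) i * V (k + 1) (i - 1)) +
          (π / 2) * frobSq (V (k + 1) (i - 1) - stepM (U k (i - 1))) ≤
        (τ / 2) * frobSq (U (k + 1) i - W (k + 1) i * Z) +
          (π / 2) * frobSq (Z - stepM (U k (i - 1))))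
    -- (4): `U_i^{k+1}` globally minimizes its subproblem
    (hUup : ∀ k, ∀ i ∈ Finset.Icc 1 (h - 1), ∀ Z : Matrix (Fin (d i)) (Fin N) ℝ,
      (τ / 2) * frobSq (U (k + 1) i - W k i * V k (i - 1)) +
          (π / 2) * frobSq (V (k + 1) i - stepM (U (k + 1) i)) ≤
        (τ / 2) * frobSq (Z - W k i * V k (i - 1)) +
          (π / 2) * frobSq (V (k + 1) i - stepM Z)) :
    ∀ k : ℕ,
      F (W (k + 1)) (U (k + 1)) (V (k + 1)) - F (W k) (U k) (V k) ≤
        -((γ - 1 / β) / 2) *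
            (∑ i ∈ Finset.Icc 1 h, frobSq (W (k + 1) i - W k i)) -
          (π / 2) * (∑ i ∈ Finset.Icc 1 (h - 1), frobSq (V (k + 1) i - V k i)) := by

  intro k
  subst hF
  exact backward_sweep_descent hh (hUh k (U k h))
    (c₁ := fun i => frobSq (U (k + 1) i - W k i * V k (i - 1)))
    (c₂ := fun i => frobSq (U (k + 1) i - W (k + 1) i * V k (i - 1)))
    (e₁ := fun i => frobSq (V (k + 1) i - stepM (U k i)))
    (fun i hi => sufficient_decrease_of_mem_proxSet hτ.le hβ.ne' (hWup k i hi))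
    (fun i hi => sufficient_decrease_of_isMin_lsq hτ.le (hVup k i hi))
    (fun i hi => hUup k i hi (U k i))
    (by simp only [hV0])

/-- BCD descent property: if the BCD iterates satisfy the update
conditions (1)–(4), then the objective `F` decreases by at least
`((γ − 1/β)/2) Σᵢ‖Wᵢ^{k+1} − Wᵢ^k‖² + (π/2) Σᵢ‖Vᵢ^{k+1} − Vᵢ^k‖²` at each step. -/
theorem BCD_descent_property
    (h N : ℕ) (hh : 1 ≤ h) (hN : 1 ≤ N)
    (d : ℕ → ℕ) (hd : ∀ i, 1 ≤ d i)
    (Y : Matrix (Fin (d h)) (Fin N) ℝ) (V0 : Matrix (Fin (d 0)) (Fin N) ℝ)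
    (τ π γ lam β : ℝ)
    (hτ : 0 < τ) (hπ : 0 < π) (hγ : 0 < γ) (hlam : 0 < lam) (hβ : 0 < β)
    (W : ℕ → (i : ℕ) → Matrix (Fin (d i)) (Fin (d (i - 1))) ℝ)
    (U : ℕ → (i : ℕ) → Matrix (Fin (d i)) (Fin N) ℝ)
    (V : ℕ → (i : ℕ) → Matrix (Fin (d i)) (Fin N) ℝ)
    (hV0 : ∀ k, V k 0 = V0)
    (F : ((i : ℕ) → Matrix (Fin (d i)) (Fin (d (i - 1))) ℝ) →
      ((i : ℕ) → Matrix (Fin (d i)) (Fin N) ℝ) →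
      ((i : ℕ) → Matrix (Fin (d i)) (Fin N) ℝ) → ℝ)
    (hF : F = fun Wf Uf Vf =>
      (1 / (2 * (N : ℝ))) * frobSq (Y - hdmxM (Uf h)) +
      (∑ i ∈ Finset.Icc 1 h, (lam * norm20 (Wf i) + (γ / 2) * frobSq (Wf i))) +
      (τ / 2) * (∑ i ∈ Finset.Icc 1 h, frobSq (Uf i - Wf i * Vf (i - 1))) +
      (π / 2) * (∑ i ∈ Finset.Icc 1 (h - 1), frobSq (Vf i - stepM (Uf i))))
    -- (1): `U_h^{k+1}` globally minimizes its subproblem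
    (hUh : ∀ k, ∀ Z : Matrix (Fin (d h)) (Fin N) ℝ,
      (τ / 2) * frobSq (U (k + 1) h - W k h * V k (h - 1)) +
          (1 / (2 * (N : ℝ))) * frobSq (Y - hdmxM (U (k + 1) h)) ≤
        (τ / 2) * frobSq (Z - W k h * V k (h - 1)) +
          (1 / (2 * (N : ℝ))) * frobSq (Y - hdmxM Z))
    -- (2): `W_i^{k+1}` satisfies the proximal fixed-point inclusion, with
    -- `∇_W Φ(W; U, V) = τ(WV − U)Vᵀ + γW` for `Φ(W;U,V) = (τ/2)‖U−WV‖² + (γ/2)‖W‖²`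
    (hWup : ∀ k, ∀ i ∈ Finset.Icc 1 h,
      W (k + 1) i ∈ ProxSet β (fun Z => lam * norm20 Z)
        (W (k + 1) i - β •
          (τ • ((W (k + 1) i * V k (i - 1) - U (k + 1) i) * (V k (i - 1))ᵀ) +
            γ • W (k + 1) i)))
    -- (3): `V_i^{k+1}` globally minimizes its subproblem (indexed here by
    -- `i ∈ {2, …, h}`, i.e. the subproblem of `V_{i−1}^{k+1}` for `i−1 ∈ [h−1]`)
    (hVup : ∀ k, ∀ i ∈ Finset.Icc 2 h, ∀ Z : Matrix (Fin (d (i - 1))) (Fin N) ℝ,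
      (τ / 2) * frobSq (U (k + 1) i - W (k + 1) i * V (k + 1) (i - 1)) +
          (π / 2) * frobSq (V (k + 1) (i - 1) - stepM (U k (i - 1))) ≤
        (τ / 2) * frobSq (U (k + 1) i - W (k + 1) i * Z) +
          (π / 2) * frobSq (Z - stepM (U k (i - 1))))
    -- (4): `U_i^{k+1}` globally minimizes its subproblem
    (hUup : ∀ k, ∀ i ∈ Finset.Icc 1 (h - 1), ∀ Z : Matrix (Fin (d i)) (Fin N) ℝ,
      (τ / 2) * frobSq (U (k + 1) i - W k i * V k (i - 1)) +
          (π / 2) * frobSq (V (k + 1) i - stepM (U (k + 1) i)) ≤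
        (τ / 2) * frobSq (Z - W k i * V k (i - 1)) +
          (π / 2) * frobSq (V (k + 1) i - stepM Z)) :
    ∀ k : ℕ,
      F (W (k + 1)) (U (k + 1)) (V (k + 1)) - F (W k) (U k) (V k) ≤
        -((γ - 1 / β) / 2) *
            (∑ i ∈ Finset.Icc 1 h, frobSq (W (k + 1) i - W k i)) -
          (π / 2) * (∑ i ∈ Finset.Icc 1 (h - 1), frobSq (V (k + 1) i - V k i)) :=
  BCD_descent_property_general h N hh d Y V0 τ π γ lam β hτ hβ W U V hV0 F hF hUh hWup hVup hUup
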